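/- arXiv:2101.05903 — 3 statements merged into one kernel-verified Lean document; each statement's English description precedes it below -/
import Mathlib

section
/- Let Q : ℝ → Matrix (Fin 3) (Fin 3) ℝ be differentiable with Q(t)ᵀ Q(t) = 1 and det Q(t) = 1 for all t, let e : ℝ → ℝ³ be differentiable, let ω̄ : ℝ → ℝ³, and let q̇ : ℝ → ℝ³ satisfy (1/2) q̇(t) × u = Q̇(t) Q(t)ᵀ u for all u ∈ ℝ³ and all t. Define ẽ(t) := Q(t)ᵀ e(t) and the transformed mean vorticity ω̃̄(t) := Q(t)ᵀ (ω̄(t) − q̇(t)). Then the relative tangent velocity transforms objectively: d/dt ẽ(t) − (1/2) ω̃̄(t) × ẽ(t) = Q(t)ᵀ ( d/dt e(t) − (1/2) ω̄(t) × e(t) ) for all t. -/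
/-!
Differentiating `ẽ = Qᵀ e` gives `Q̇ᵀ e + Qᵀ ė`. A rotation commutes with the cross product, so
`ω̃ × ẽ = Qᵀ ((ω̄ - q̇) × e)`; and differentiating `Qᵀ Q = 1` gives `Qᵀ (Q̇ Qᵀ) = -Q̇ᵀ`, so the
frame-spin term `½ Qᵀ (q̇ × e) = Qᵀ Q̇ Qᵀ e` cancels `Q̇ᵀ e` exactly.
-/

open Matrix

/-- Entrywise time derivative of a time-dependent matrix. -/
noncomputable def matDeriv (Q : ℝ → Matrix (Fin 3) (Fin 3) ℝ) (t : ℝ) :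
    Matrix (Fin 3) (Fin 3) ℝ :=
  Matrix.of fun i j => deriv (fun s => Q s i j) t

/-- The cross product on Euclidean 3-space. -/
noncomputable def cross3 (a b : EuclideanSpace ℝ (Fin 3)) : EuclideanSpace ℝ (Fin 3) :=
  (EuclideanSpace.equiv (Fin 3) ℝ).symm
    (crossProduct ((EuclideanSpace.equiv (Fin 3) ℝ) a) ((EuclideanSpace.equiv (Fin 3) ℝ) b))

open scoped Topology

section Calculus

variable {l m n : Type*} [Fintype m] {t : ℝ}

theorem hasDerivAt_mulVec {A : ℝ → Matrix l m ℝ} {A' : Matrix l m ℝ} {v : ℝ → m → ℝ}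
    {v' : m → ℝ} (hA : ∀ i j, HasDerivAt (fun s => A s i j) (A' i j) t)
    (hv : HasDerivAt v v' t) :
    HasDerivAt (fun s => A s *ᵥ v s) (A' *ᵥ v t + A t *ᵥ v') t := by
  refine hasDerivAt_pi.2 fun i => ?_
  simp only [Pi.add_apply, mulVec, dotProduct, ← Finset.sum_add_distrib]
  exact HasDerivAt.fun_sum fun j _ => (hA i j).mul (hasDerivAt_pi.1 hv j)

theorem hasDerivAt_mul_apply {A : ℝ → Matrix l m ℝ} {B : ℝ → Matrix m n ℝ} {A' : Matrix l m ℝ}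
    {B' : Matrix m n ℝ} (hA : ∀ i j, HasDerivAt (fun s => A s i j) (A' i j) t)
    (hB : ∀ i j, HasDerivAt (fun s => B s i j) (B' i j) t) (i : l) (k : n) :
    HasDerivAt (fun s => (A s * B s) i k) ((A' * B t + A t * B') i k) t :=
  hasDerivAt_pi.1 (hasDerivAt_mulVec hA (hasDerivAt_pi.2 fun j => hB j k)) i

theorem hasDerivAt_toEuclideanLin_apply [Fintype l] [DecidableEq m] {A : ℝ → Matrix l m ℝ}
    {A' : Matrix l m ℝ} {v : ℝ → EuclideanSpace ℝ m} {v' : EuclideanSpace ℝ m}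
    (hA : ∀ i j, HasDerivAt (fun s => A s i j) (A' i j) t) (hv : HasDerivAt v v' t) :
    HasDerivAt (fun s => toEuclideanLin (A s) (v s))
      (toEuclideanLin A' (v t) + toEuclideanLin (A t) v') t := by
  have hcoord := (EuclideanSpace.equiv m ℝ).hasFDerivAt.comp_hasDerivAt t hv
  exact (EuclideanSpace.equiv l ℝ).symm.hasFDerivAt.comp_hasDerivAt t
    (hasDerivAt_mulVec hA hcoord)

theorem transpose_mul_add_transpose_mul_eq_zero_of_hasDerivAt [DecidableEq m]
    {Q : ℝ → Matrix m m ℝ} {Q' : Matrix m m ℝ} (hQ : ∀ᶠ s in 𝓝 t, (Q s)ᵀ * Q s = 1)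
    (hQ' : ∀ i j, HasDerivAt (fun s => Q s i j) (Q' i j) t) :
    Q'ᵀ * Q t + (Q t)ᵀ * Q' = 0 := by
  ext i j
  have hconst : HasDerivAt (fun s => ((Q s)ᵀ * Q s) i j) 0 t :=
    (hasDerivAt_const t ((1 : Matrix m m ℝ) i j)).congr_of_eventuallyEq
      (hQ.mono fun s hs => by simp only [hs])
  exact (hasDerivAt_mul_apply (fun i j => hQ' j i) hQ' i j).unique hconst

end Calculus

theorem ofLp_cross3 (a b : EuclideanSpace ℝ (Fin 3)) :
    (cross3 a b).ofLp = a.ofLp ⨯₃ b.ofLp :=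
  rfl

theorem cross_mulVec_mulVec {R : Type*} [CommRing R] (M : Matrix (Fin 3) (Fin 3) R)
    (a b : Fin 3 → R) : (M *ᵥ a) ⨯₃ (M *ᵥ b) = (adjugate M)ᵀ *ᵥ (a ⨯₃ b) := by
  ext i
  fin_cases i <;>
    simp [cross_apply, mulVec, dotProduct, adjugate_fin_three, Fin.sum_univ_three] <;> ring

theorem adjugate_eq_transpose_of_det_eq_one {R n : Type*} [CommRing R] [Fintype n]
    [DecidableEq n] {M : Matrix n n R} (hM : Mᵀ * M = 1) (hdet : M.det = 1) :
    adjugate M = Mᵀ :=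
  calc adjugate M = adjugate M * (M * Mᵀ) := by rw [mul_eq_one_comm.mp hM, mul_one]
    _ = Mᵀ := by rw [← mul_assoc, adjugate_mul, hdet, one_smul, one_mul]

theorem cross3_toEuclideanLin {M : Matrix (Fin 3) (Fin 3) ℝ} (hM : Mᵀ * M = 1) (hdet : M.det = 1)
    (a b : EuclideanSpace ℝ (Fin 3)) :
    cross3 (toEuclideanLin M a) (toEuclideanLin M b) = toEuclideanLin M (cross3 a b) := by
  apply WithLp.ofLp_injective
  simp [ofLp_cross3, toLpLin_apply, cross_mulVec_mulVec,
    adjugate_eq_transpose_of_det_eq_one hM hdet]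

theorem cross3_sub_left (a b c : EuclideanSpace ℝ (Fin 3)) :
    cross3 (a - b) c = cross3 a c - cross3 b c := by
  apply WithLp.ofLp_injective
  simp [ofLp_cross3]

theorem transpose_mul_mul_transpose_eq_neg {R m : Type*} [CommRing R] [Fintype m] [DecidableEq m]
    {Q Q' : Matrix m m R} (hQ : Q * Qᵀ = 1) (hskew : Q'ᵀ * Q + Qᵀ * Q' = 0) :
    Qᵀ * (Q' * Qᵀ) = -Q'ᵀ := by
  rw [← mul_assoc, eq_neg_of_add_eq_zero_right hskew, neg_mul, mul_assoc, hQ, mul_one]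

/-- Under an observer change with rotation Q(t) ∈ SO(3) whose frame
vorticity q̇ satisfies (1/2) q̇ × u = Q̇Qᵀ u, the relative tangent velocity
ė − (1/2) ω̄ × e transforms objectively. -/
theorem stmt9
    (Q : ℝ → Matrix (Fin 3) (Fin 3) ℝ)
    (hQdiff : ∀ i j : Fin 3, Differentiable ℝ (fun t => Q t i j))
    (hQ : ∀ t : ℝ, (Q t)ᵀ * Q t = 1)
    (hdet : ∀ t : ℝ, (Q t).det = 1)
    (e : ℝ → EuclideanSpace ℝ (Fin 3))
    (he : Differentiable ℝ e)
    (ωbar qdot : ℝ → EuclideanSpace ℝ (Fin 3))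
    (hqdot : ∀ (t : ℝ) (u : EuclideanSpace ℝ (Fin 3)),
      (1 / 2 : ℝ) • cross3 (qdot t) u
        = Matrix.toEuclideanLin (matDeriv Q t * (Q t)ᵀ) u)
    (et ωt : ℝ → EuclideanSpace ℝ (Fin 3))
    (het : ∀ t : ℝ, et t = Matrix.toEuclideanLin (Q t)ᵀ (e t))
    (hωt : ∀ t : ℝ, ωt t = Matrix.toEuclideanLin (Q t)ᵀ (ωbar t - qdot t)) :
    ∀ t : ℝ,
      deriv et t - (1 / 2 : ℝ) • cross3 (ωt t) (et t)
        = Matrix.toEuclideanLin (Q t)ᵀ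
            (deriv e t - (1 / 2 : ℝ) • cross3 (ωbar t) (e t)) := by
  intro t
  have hQQt : Q t * (Q t)ᵀ = 1 := mul_eq_one_comm.mp (hQ t)
  have hQ' : ∀ i j, HasDerivAt (fun s => Q s i j) (matDeriv Q t i j) t :=
    fun i j => (hQdiff i j t).hasDerivAt
  have hskew := transpose_mul_add_transpose_mul_eq_zero_of_hasDerivAt (.of_forall hQ) hQ'
  have hderiv : deriv et t
      = toEuclideanLin (matDeriv Q t)ᵀ (e t) + toEuclideanLin (Q t)ᵀ (deriv e t) := by
    rw [funext het]
    exact (hasDerivAt_toEuclideanLin_apply (fun i j => hQ' j i) (he t).hasDerivAt).deriv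
  have hframe : (1 / 2 : ℝ) • toEuclideanLin (Q t)ᵀ (cross3 (qdot t) (e t))
      = -toEuclideanLin (matDeriv Q t)ᵀ (e t) := by
    rw [← map_smul, hqdot, ← LinearMap.comp_apply, ← toLpLin_mul_same,
      transpose_mul_mul_transpose_eq_neg hQQt hskew, map_neg, LinearMap.neg_apply]
  have hcross : cross3 (ωt t) (et t) = toEuclideanLin (Q t)ᵀ (cross3 (ωbar t) (e t))
      - toEuclideanLin (Q t)ᵀ (cross3 (qdot t) (e t)) := by
    have hQtdet : (Q t)ᵀ.det = 1 := by rw [det_transpose, hdet]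
    rw [hωt, het, cross3_toEuclideanLin (by rwa [transpose_transpose]) hQtdet, cross3_sub_left,
      map_sub]
  rw [hderiv, hcross, map_sub, map_smul, smul_sub, hframe]
  abel
end

section
/- Let v : ℝⁿ → ℝⁿ be a continuously differentiable steady velocity field, let x : [t₀, t_N] → ℝⁿ satisfy ẋ(t) = v(x(t)), and assume t ↦ Dv(x(t)) is continuous and bounded in operator norm on [t₀, t_N]. If ξ : [t₀, t_N] → ℝⁿ solves the equation of variations ξ̇(t) = Dv(x(t)) ξ(t) with initial condition ξ(t₀) = v(x(t₀)), then ξ(t) = v(x(t)) for all t ∈ [t₀, t_N]. Consequently, if v(x(t₀)) ≠ 0 and v(x(t_N)) ≠ 0, the averaged stretching exponent of this material tangent vector equals the trajectory stretching exponent: (1/(t_N − t₀)) log(‖ξ(t_N)‖/‖ξ(t₀)‖) = (1/(t_N − t₀)) log(‖ẋ(t_N)‖/‖ẋ(t₀)‖). -/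
/-!
By the chain rule, `t ↦ v (x t)` solves the equation of variations
`ξ' = Dv(x t) ξ` along the trajectory, and it starts at `v (x t₀) = ξ t₀`. A linear equation
with bounded coefficient has unique solutions (Grönwall), so `ξ = v ∘ x = ẋ`, and the two
stretching exponents are computed from the same vectors.
-/

open Set

theorem ODE_solution_unique_of_linear_of_norm_le {E : Type*} [NormedAddCommGroup E]
    [NormedSpace ℝ E] {A : ℝ → E →L[ℝ] E} {M a b : ℝ} {f g : ℝ → E}
    (hA : ∀ t ∈ Icc a b, ‖A t‖ ≤ M)
    (hf : ∀ t ∈ Icc a b, HasDerivAt f (A t (f t)) t)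
    (hg : ∀ t ∈ Icc a b, HasDerivAt g (A t (g t)) t) (ha : f a = g a) :
    EqOn f g (Icc a b) := by
  have hdiff : ∀ t ∈ Icc a b, HasDerivAt (f - g) (A t ((f - g) t)) t := fun t ht => by
    simpa only [Pi.sub_apply, map_sub] using (hf t ht).sub (hg t ht)
  have hzero := eq_zero_of_abs_deriv_le_mul_abs_self_of_eq_zero_right (K := M)
    (fun t ht => (hdiff t ht).continuousAt.continuousWithinAt)
    (fun t ht => (hdiff t (Ico_subset_Icc_self ht)).hasDerivWithinAt)
    (by simp [ha])
    (fun t ht => (A t).le_of_opNorm_le (hA t (Ico_subset_Icc_self ht)) _)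
  exact fun t ht => sub_eq_zero.mp (hzero t ht)

theorem hasDerivAt_vectorField_along_integralCurve {E : Type*} [NormedAddCommGroup E]
    [NormedSpace ℝ E] {v : E → E} {x : ℝ → E} {t : ℝ}
    (hv : DifferentiableAt ℝ v (x t)) (hx : HasDerivAt x (v (x t)) t) :
    HasDerivAt (fun s => v (x s)) (fderiv ℝ v (x t) (v (x t))) t :=
  hv.hasFDerivAt.comp_hasDerivAt t hx

theorem stmt12_general (n : ℕ)
    (v : EuclideanSpace ℝ (Fin n) → EuclideanSpace ℝ (Fin n))
    (hv : ContDiff ℝ 1 v)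
    (t₀ tN : ℝ) (ht : t₀ < tN)
    (x : ℝ → EuclideanSpace ℝ (Fin n))
    (hx : ∀ t ∈ Set.Icc t₀ tN, HasDerivAt x (v (x t)) t)
    (hbdd : ∃ M : ℝ, ∀ t ∈ Set.Icc t₀ tN, ‖fderiv ℝ v (x t)‖ ≤ M)
    (ξ : ℝ → EuclideanSpace ℝ (Fin n))
    (hξ : ∀ t ∈ Set.Icc t₀ tN, HasDerivAt ξ ((fderiv ℝ v (x t)) (ξ t)) t)
    (hξ0 : ξ t₀ = v (x t₀)) :
    (∀ t ∈ Set.Icc t₀ tN, ξ t = v (x t)) ∧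
    (v (x t₀) ≠ 0 → v (x tN) ≠ 0 →
      (1 / (tN - t₀)) * Real.log (‖ξ tN‖ / ‖ξ t₀‖)
        = (1 / (tN - t₀)) * Real.log (‖deriv x tN‖ / ‖deriv x t₀‖)) := by
  obtain ⟨M, hM⟩ := hbdd
  have hξ_eq : EqOn ξ (fun t => v (x t)) (Icc t₀ tN) :=
    ODE_solution_unique_of_linear_of_norm_le hM hξ
      (fun t ht => hasDerivAt_vectorField_along_integralCurve
        ((hv.differentiable one_ne_zero) (x t)) (hx t ht)) hξ0
  have ht₀ : t₀ ∈ Icc t₀ tN := left_mem_Icc.mpr ht.le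
  have htN : tN ∈ Icc t₀ tN := right_mem_Icc.mpr ht.le
  refine ⟨hξ_eq, fun _ _ => ?_⟩
  rw [(hx t₀ ht₀).deriv, (hx tN htN).deriv, hξ0, hξ_eq htN]

/-- In a steady C¹ flow, the solution of the equation of variations
with initial condition ξ(t₀) = v(x(t₀)) coincides with the Lagrangian velocity
along the trajectory, and hence the averaged stretching exponent of this material
vector equals the trajectory stretching exponent (TSE). -/
theorem stmt12 (n : ℕ)
    (v : EuclideanSpace ℝ (Fin n) → EuclideanSpace ℝ (Fin n))
    (hv : ContDiff ℝ 1 v)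
    (t₀ tN : ℝ) (ht : t₀ < tN)
    (x : ℝ → EuclideanSpace ℝ (Fin n))
    (hx : ∀ t ∈ Set.Icc t₀ tN, HasDerivAt x (v (x t)) t)
    (hcont : ContinuousOn (fun t => fderiv ℝ v (x t)) (Set.Icc t₀ tN))
    (hbdd : ∃ M : ℝ, ∀ t ∈ Set.Icc t₀ tN, ‖fderiv ℝ v (x t)‖ ≤ M)
    (ξ : ℝ → EuclideanSpace ℝ (Fin n))
    (hξ : ∀ t ∈ Set.Icc t₀ tN, HasDerivAt ξ ((fderiv ℝ v (x t)) (ξ t)) t)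
    (hξ0 : ξ t₀ = v (x t₀)) :
    (∀ t ∈ Set.Icc t₀ tN, ξ t = v (x t)) ∧
    (v (x t₀) ≠ 0 → v (x tN) ≠ 0 →
      (1 / (tN - t₀)) * Real.log (‖ξ tN‖ / ‖ξ t₀‖)
        = (1 / (tN - t₀)) * Real.log (‖deriv x tN‖ / ‖deriv x t₀‖)) :=
  stmt12_general n v hv t₀ tN ht x hx hbdd ξ hξ hξ0
end

section
/- Let e : ℝ → ℝⁿ be twice continuously differentiable with ‖e(t)‖ = 1 for all t. Then for every t, lim_{δ → 0, δ ≠ 0} arccos(⟨e(t), e(t+δ)⟩) / |δ| = ‖ė(t)‖. That is, the instantaneous angular speed of a unit vector curve, defined as the rate of change of the angle swept, equals the norm of its derivative. -/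
open scoped RealInnerProductSpace
open Filter Real
open scoped Topology

/-- Chord–angle identity for unit vectors. -/
lemma chord_arccos {n : ℕ} (u v : EuclideanSpace ℝ (Fin n)) (hu : ‖u‖ = 1) (hv : ‖v‖ = 1) :
    Real.arccos ⟪u, v⟫ = 2 * Real.arcsin (‖v - u‖ / 2) := by
  have hc1 : |⟪u, v⟫| ≤ 1 := by
    have := abs_real_inner_le_norm u v
    rwa [hu, hv, mul_one] at this
  set θ := Real.arccos ⟪u, v⟫ with hθ
  have hθ0 : 0 ≤ θ := Real.arccos_nonneg _
  have hθπ : θ ≤ π := Real.arccos_le_pi _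
  have hcos : Real.cos θ = ⟪u, v⟫ :=
    Real.cos_arccos (neg_le_of_abs_le hc1) (le_of_abs_le hc1)
  have h2 : ‖v - u‖ ^ 2 = 2 - 2 * ⟪u, v⟫ := by
    rw [norm_sub_sq_real, hu, hv, real_inner_comm]; ring
  have hs : Real.sin (θ / 2) = Real.sqrt ((1 - Real.cos θ) / 2) :=
    Real.sin_half_eq_sqrt hθ0 (by linarith [Real.pi_pos])
  have hsin0 : 0 ≤ Real.sin (θ / 2) :=
    Real.sin_nonneg_of_nonneg_of_le_pi (by linarith) (by linarith [Real.pi_pos])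
  have hnn : 0 ≤ (1 - Real.cos θ) / 2 := by
    have := Real.cos_le_one θ; linarith
  have hsq : ‖v - u‖ ^ 2 = (2 * Real.sin (θ / 2)) ^ 2 := by
    rw [mul_pow, hs, Real.sq_sqrt hnn, hcos, h2]; ring
  have hnorm : ‖v - u‖ = 2 * Real.sin (θ / 2) := by
    nlinarith [norm_nonneg (v - u), sq_nonneg (‖v - u‖ - 2 * Real.sin (θ / 2))]
  have hhalf : ‖v - u‖ / 2 = Real.sin (θ / 2) := by rw [hnorm]; ring
  rw [hhalf]
  rw [Real.arcsin_sin (by linarith [Real.pi_pos]) (by linarith)]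
  ring

/-- For a C² curve of unit vectors e(t), the instantaneous angular
speed lim_{δ→0} arccos⟨e(t), e(t+δ)⟩ / |δ| equals ‖ė(t)‖. -/
theorem stmt13 (n : ℕ)
    (e : ℝ → EuclideanSpace ℝ (Fin n))
    (he : ContDiff ℝ 2 e)
    (hunit : ∀ t : ℝ, ‖e t‖ = 1) :
    ∀ t : ℝ,
      Filter.Tendsto (fun δ : ℝ => Real.arccos ⟪e t, e (t + δ)⟫ / |δ|)
        (nhdsWithin 0 {0}ᶜ) (nhds ‖deriv e t‖) := by
  intro t
  have hde : HasDerivAt e (deriv e t) t :=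
    ((he.differentiable (by norm_num)) t).hasDerivAt
  -- rate of change of the chord length
  have hrate : Tendsto (fun δ : ℝ => ‖e (t + δ) - e t‖ / |δ|) (𝓝[≠] (0:ℝ))
      (𝓝 ‖deriv e t‖) := by
    have h := (hasDerivAt_iff_tendsto_slope_zero.mp hde).norm
    refine h.congr fun δ => ?_
    rw [norm_smul, Real.norm_eq_abs, abs_inv, inv_mul_eq_div]
  -- the normalized chord-angle function
  have hg : HasDerivAt (fun y : ℝ => 2 * Real.arcsin (y / 2)) 1 0 := by
    have h1 : HasDerivAt Real.arcsin 1 ((0:ℝ) / 2) := by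
      simpa using Real.hasDerivAt_arcsin (by norm_num) (by norm_num : (0:ℝ) ≠ 1)
    have h2 : HasDerivAt (fun y : ℝ => y / 2) (1 / 2) 0 :=
      (hasDerivAt_id (0:ℝ)).div_const 2
    have h3 := h1.comp 0 h2
    simpa using h3.const_mul 2
  set G : ℝ → ℝ := fun y => if y = 0 then 1 else 2 * Real.arcsin (y / 2) / y with hGdef
  have hG : Tendsto G (𝓝 (0:ℝ)) (𝓝 1) := by
    rw [← nhdsNE_sup_pure (0:ℝ)]
    refine Tendsto.sup ?_ ?_
    · have h := hasDerivAt_iff_tendsto_slope.mp hg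
      refine Tendsto.congr' ?_ h
      filter_upwards [self_mem_nhdsWithin] with y hy
      have hy0 : y ≠ 0 := hy
      simp [G, slope_def_field, hy0, Real.arcsin_zero, div_eq_mul_inv]
    · have : G 0 = 1 := by simp [G]
      simpa [this] using tendsto_pure_nhds G 0
  have hΔ : Tendsto (fun δ : ℝ => ‖e (t + δ) - e t‖) (𝓝[≠] (0:ℝ)) (𝓝 0) := by
    have hc : Continuous fun δ : ℝ => ‖e (t + δ) - e t‖ :=
      ((he.continuous.comp (continuous_const.add continuous_id)).sub continuous_const).norm
    have h := hc.tendsto 0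
    simp only [add_zero, sub_self, norm_zero] at h
    exact h.mono_left nhdsWithin_le_nhds
  have h1 : Tendsto (fun δ : ℝ => G ‖e (t + δ) - e t‖) (𝓝[≠] (0:ℝ)) (𝓝 1) := hG.comp hΔ
  have hmul := h1.mul hrate
  rw [one_mul] at hmul
  refine Tendsto.congr' ?_ hmul
  filter_upwards [self_mem_nhdsWithin] with δ hδ
  have hδ0 : δ ≠ 0 := hδ
  have habs : |δ| ≠ 0 := abs_ne_zero.mpr hδ0
  rw [chord_arccos (e t) (e (t + δ)) (hunit t) (hunit _)]
  by_cases h0 : ‖e (t + δ) - e t‖ = 0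
  · simp [G, h0]
  · simp only [G, if_neg h0]
    field_simp
end
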